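/- arXiv:2209.01503 — 2 statements merged into one kernel-verified Lean document; each statement's English description precedes it below -/
import Mathlib

section
/- For any real numbers a₀, b₀, λ ≥ 0 there exists T > 0 such that any sequences (a_n)_{n≥0} and (b_n)_{n≥0} of nonnegative real numbers with the given values a₀, b₀ that satisfy, for all n ≥ 0, the recursive inequalities a_{n+1} ≤ λ·√(2T+1)·b_n and b_{n+1} ≤ T·(1+λ)·a_n·(2·Σ_{k=0}^{n} a_k + Σ_{k=0}^{n} b_k) + T·λ·b_n·Σ_{k=0}^{n} a_k, have the property that both series Σ_{k=0}^{∞} a_k and Σ_{k=0}^{∞} b_k converge. -/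
/-!
For small `T` both sequences are dominated by geometric sequences: `a_n ≤ M 2⁻ⁿ` and
`b_n ≤ c M 2⁻ⁿ`. The weight `c` absorbs the coefficient `λ√(2T+1) ≤ 2λ` of the first
recursion, which does not shrink with `T`; once the partial sums are bounded by `2M` and
`2cM`, the second recursion is linear in `a_n, b_n` with a coefficient of order `T`, so it
halves the bound as soon as `T` is small.
-/

open Finset

lemma sum_range_le_two_mul_of_le_geometric {f : ℕ → ℝ} {C : ℝ} {m : ℕ} (hC : 0 ≤ C)
    (hf : ∀ k < m, f k ≤ C * (1 / 2) ^ k) : ∑ k ∈ range m, f k ≤ 2 * C :=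
  calc ∑ k ∈ range m, f k ≤ ∑ k ∈ range m, C * (1 / 2) ^ k :=
        sum_le_sum fun k hk => hf k (mem_range.mp hk)
    _ = C * ∑ k ∈ range m, (1 / 2 : ℝ) ^ k := (mul_sum ..).symm
    _ ≤ C * 2 := mul_le_mul_of_nonneg_left (sum_geometric_two_le m) hC
    _ = 2 * C := mul_comm _ _

theorem le_geometric_of_coupled_recursion {A B : ℕ → ℝ} {M c p q r : ℝ}
    (hA : ∀ n, 0 ≤ A n) (hB : ∀ n, 0 ≤ B n) (hc : 0 ≤ c)
    (hp : 0 ≤ p) (hq : 0 ≤ q) (hr : 0 ≤ r)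
    (hpc : p * c ≤ 1 / 2) (hqr : M * (q * (4 + 2 * c) + 2 * r * c) ≤ c / 2)
    (hA0 : A 0 ≤ M) (hB0 : B 0 ≤ c * M)
    (hrecA : ∀ n, A (n + 1) ≤ p * B n)
    (hrecB : ∀ n, B (n + 1) ≤
      q * A n * (2 * ∑ k ∈ range (n + 1), A k + ∑ k ∈ range (n + 1), B k)
        + r * B n * ∑ k ∈ range (n + 1), A k) :
    ∀ n, A n ≤ M * (1 / 2) ^ n ∧ B n ≤ c * M * (1 / 2) ^ n := by
  have hM : 0 ≤ M := (hA 0).trans hA0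
  intro n
  induction n using Nat.strong_induction_on with
  | _ n ih =>
  cases n with
  | zero => simpa using ⟨hA0, hB0⟩
  | succ n =>
    obtain ⟨hAn, hBn⟩ := ih n n.lt_succ_self
    have hSA : ∑ k ∈ range (n + 1), A k ≤ 2 * M :=
      sum_range_le_two_mul_of_le_geometric hM fun k hk => (ih k hk).1
    have hSB : ∑ k ∈ range (n + 1), B k ≤ 2 * (c * M) :=
      sum_range_le_two_mul_of_le_geometric (by positivity) fun k hk => (ih k hk).2
    have hSA0 : 0 ≤ ∑ k ∈ range (n + 1), A k := sum_nonneg fun k _ => hA k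
    have hSB0 : 0 ≤ ∑ k ∈ range (n + 1), B k := sum_nonneg fun k _ => hB k
    constructor
    · calc A (n + 1) ≤ p * B n := hrecA n
        _ ≤ p * (c * M * (1 / 2) ^ n) := by gcongr
        _ = p * c * (M * (1 / 2) ^ n) := by ring
        _ ≤ 1 / 2 * (M * (1 / 2) ^ n) := by gcongr
        _ = M * (1 / 2) ^ (n + 1) := by ring
    · calc B (n + 1)
          ≤ q * A n * (2 * ∑ k ∈ range (n + 1), A k + ∑ k ∈ range (n + 1), B k)
            + r * B n * ∑ k ∈ range (n + 1), A k := hrecB n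
        _ ≤ q * (M * (1 / 2) ^ n) * (2 * (2 * M) + 2 * (c * M))
            + r * (c * M * (1 / 2) ^ n) * (2 * M) := by gcongr
        _ = M * (q * (4 + 2 * c) + 2 * r * c) * (M * (1 / 2) ^ n) := by ring
        _ ≤ c / 2 * (M * (1 / 2) ^ n) := by gcongr
        _ = c * M * (1 / 2) ^ (n + 1) := by ring

/-- For any `a₀, b₀, λ ≥ 0` there exists `T > 0` such that any nonnegative
sequences `(a_n)`, `(b_n)` starting from `a₀, b₀` and satisfying the recursive inequalities
`a_{n+1} ≤ λ√(2T+1)·b_n` and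
`b_{n+1} ≤ T(1+λ)·a_n·(2∑_{k≤n} a_k + ∑_{k≤n} b_k) + Tλ·b_n·∑_{k≤n} a_k`
have convergent series `∑ a_k` and `∑ b_k`. -/
theorem iteration_scheme_series_converge (a₀ b₀ lam : ℝ)
    (ha₀ : 0 ≤ a₀) (hb₀ : 0 ≤ b₀) (hlam : 0 ≤ lam) :
    ∃ T : ℝ, 0 < T ∧
      ∀ A B : ℕ → ℝ, A 0 = a₀ → B 0 = b₀ →
        (∀ n, 0 ≤ A n) → (∀ n, 0 ≤ B n) →
        (∀ n, A (n + 1) ≤ lam * Real.sqrt (2 * T + 1) * B n) →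
        (∀ n, B (n + 1) ≤
            T * (1 + lam) * A n *
                (2 * ∑ k ∈ Finset.range (n + 1), A k + ∑ k ∈ Finset.range (n + 1), B k)
              + T * lam * B n * ∑ k ∈ Finset.range (n + 1), A k) →
        Summable A ∧ Summable B := by
  set c : ℝ := 1 / (4 * (lam + 1))
  set M : ℝ := a₀ + b₀ / c
  set K : ℝ := (1 + lam) * (4 + 2 * c) + 2 * lam * c
  have hc : 0 < c := by positivity
  refine ⟨min 1 (c / (2 * (M * K + 1))), by positivity, ?_⟩
  set T : ℝ := min 1 (c / (2 * (M * K + 1)))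
  intro A B hA0 hB0 hA hB hrecA hrecB
  have hpc : lam * Real.sqrt (2 * T + 1) * c ≤ 1 / 2 := by
    have hsqrt : Real.sqrt (2 * T + 1) ≤ 2 :=
      (Real.sqrt_le_left zero_le_two).mpr (by linarith [min_le_left 1 (c / (2 * (M * K + 1)))])
    calc lam * Real.sqrt (2 * T + 1) * c ≤ lam * 2 * c := by gcongr
      _ = 1 / 2 * (lam / (lam + 1)) := by simp only [c]; field_simp; ring
      _ ≤ 1 / 2 :=
          mul_le_of_le_one_right (by norm_num) (div_le_one_of_le₀ (by linarith) (by positivity))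
  have hqr : M * (T * (1 + lam) * (4 + 2 * c) + 2 * (T * lam) * c) ≤ c / 2 := by
    have hTK : T * (M * K + 1) ≤ c / 2 := by
      have := (le_div_iff₀ (by positivity)).mp (min_le_right 1 (c / (2 * (M * K + 1))))
      linarith
    nlinarith [show 0 < T by positivity]
  have hAM : A 0 ≤ M := by rw [hA0]; exact le_add_of_nonneg_right (by positivity)
  have hBM : B 0 ≤ c * M := by
    rw [hB0, mul_add, mul_div_cancel₀ _ hc.ne']; exact le_add_of_nonneg_left (by positivity)
  have hbound := le_geometric_of_coupled_recursion hA hB hc.le (by positivity) (by positivity)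
    (by positivity) hpc hqr hAM hBM hrecA hrecB
  exact ⟨.of_nonneg_of_le hA (fun n => (hbound n).1) (summable_geometric_two.mul_left M),
    .of_nonneg_of_le hB (fun n => (hbound n).2) (summable_geometric_two.mul_left (c * M))⟩
end

section
/- Fix real numbers δ̃₁, δ̃₂, γ̃₁, γ̃₂ and u, y, z ∈ ℝ, define γ(ε) = (u + δ̃₁ε − γ̃₁ε²)²/(1 − δ̃₂ε + γ̃₂ε²)² + (y + 2γ̃₁ε²)²/(1 + 2γ̃₂ε²)² + (z − δ̃₁ε − γ̃₁ε²)²/(1 + δ̃₂ε + γ̃₂ε²)², let M = max{1, |δ̃₁|, 2|γ̃₁|, |δ̃₂|, 2|γ̃₂|} and ρ² = u² + y² + z². Then for every ε ≥ 0 with M·ε ≤ 1/4, the third derivative in ε of ε ↦ exp(−γ(ε)/2) satisfies |d³/dε³ exp(−γ(ε)/2)| ≤ 500³·M³·(ρ² + 1)³·exp(−ρ²/9). -/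
/-- The perturbed Gaussian quadratic form `γ(ε)`. -/
noncomputable def gammaForm (d1 d2 g1 g2 u y z ε : ℝ) : ℝ :=
  (u + d1 * ε - g1 * ε ^ 2) ^ 2 / (1 - d2 * ε + g2 * ε ^ 2) ^ 2
    + (y + 2 * g1 * ε ^ 2) ^ 2 / (1 + 2 * g2 * ε ^ 2) ^ 2
    + (z - d1 * ε - g1 * ε ^ 2) ^ 2 / (1 + d2 * ε + g2 * ε ^ 2) ^ 2

/-- `M = max{1, |δ̃₁|, 2|γ̃₁|, |δ̃₂|, 2|γ̃₂|}`. -/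
noncomputable def Mconst (d1 d2 g1 g2 : ℝ) : ℝ :=
  max 1 (max |d1| (max (2 * |g1|) (max |d2| (2 * |g2|))))

/-! The map `ε ↦ exp(-γ(ε)/2)` is the restriction to the real axis of `w ↦ exp(-γ(w)/2)`, which
is holomorphic on the closed disc of radius `1/(100 M)` about `ε`. On that disc each quotient
`(a + P(w))² / (1 + Q(w))²` of `γ` has `‖P‖, ‖Q‖ ≤ 1/3` and `|Im P|, |Im Q| ≤ 1/50`, which keeps its
real part above `2a²/9 - 2`. Hence `|exp(-γ/2)| ≤ e³ e^{-ρ²/9}` on the disc, and Cauchy's estimate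
bounds the third derivative at `ε` by `3! e³ (100 M)³ e^{-ρ²/9}`, which is below the claim because
`6 e³ < 125`. -/

open Complex Metric Topology

lemma iteratedDeriv_re_comp_ofReal {F : ℂ → ℂ} {U : Set ℂ} (hU : IsOpen U)
    (hF : DifferentiableOn ℂ F U) (n : ℕ) {x : ℝ} (hx : (x : ℂ) ∈ U) :
    iteratedDeriv n (fun t : ℝ => (F t).re) x = (iteratedDeriv n F x).re := by
  induction n generalizing x with
  | zero => simp
  | succ n ih =>
    have hFn : DifferentiableOn ℂ (iteratedDeriv n F) U := by
      rw [iteratedDeriv_eq_iterate]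
      exact ((hF.analyticOnNhd hU).iterated_deriv n).differentiableOn
    have hev : (fun t : ℝ => iteratedDeriv n (fun s : ℝ => (F s).re) t)
        =ᶠ[𝓝 x] fun t : ℝ => (iteratedDeriv n F t).re := by
      filter_upwards [(hU.preimage continuous_ofReal).mem_nhds hx] with t ht using ih ht
    rw [iteratedDeriv_succ, hev.deriv_eq, iteratedDeriv_succ]
    exact (hFn.differentiableAt (hU.mem_nhds hx)).hasDerivAt.real_of_complex.deriv

lemma re_sq_div_sq_mul_eq (x s b t : ℝ) (h : b ^ 2 + t ^ 2 ≠ 0) :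
    (((x + s * I) / (b + t * I)) ^ 2).re * (b ^ 2 + t ^ 2) ^ 2
      = (x * b + s * t) ^ 2 - (s * b - x * t) ^ 2 := by
  have hD : normSq ((b + t * I) ^ 2) = (b ^ 2 + t ^ 2) ^ 2 := by
    rw [map_pow, normSq_add_mul_I]
  rw [div_pow, div_re, hD]
  simp only [pow_two, mul_re, mul_im, add_re, add_im, ofReal_re, ofReal_im, I_re, I_im]
  field_simp
  ring

lemma two_ninths_sq_sub_two_mul_le_sq_sub_sq (a x s b t : ℝ) (hx : |x - a| ≤ 1 / 3) (hs : |s| ≤ 1 / 50)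
    (hb : |b - 1| ≤ 1 / 3) (ht : |t| ≤ 1 / 50) :
    (2 / 9 * a ^ 2 - 2) * (b ^ 2 + t ^ 2) ^ 2 ≤ (x * b + s * t) ^ 2 - (s * b - x * t) ^ 2 := by
  rw [abs_le] at hx hs hb ht
  have hs2 : s ^ 2 ≤ 1 / 2500 := by nlinarith
  have ht2 : t ^ 2 ≤ 1 / 2500 := by nlinarith
  have hb2 : 4 / 9 ≤ b ^ 2 ∧ b ^ 2 ≤ 16 / 9 := ⟨by nlinarith, by nlinarith⟩
  have hx_lower : a ^ 2 / 2 - 1 / 9 ≤ x ^ 2 := by nlinarith [sq_nonneg (x + (x - a))]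
  have hx_upper : x ^ 2 ≤ 2 * a ^ 2 + 2 / 9 := by nlinarith [sq_nonneg (x - 2 * a)]
  have hY : (s * b - x * t) ^ 2 ≤ 1 / 500 + a ^ 2 / 500 := by
    have e1 : s ^ 2 * b ^ 2 ≤ 1 / 2500 * (16 / 9) :=
      mul_le_mul hs2 hb2.2 (sq_nonneg b) (by norm_num)
    have e2 : x ^ 2 * t ^ 2 ≤ (2 * a ^ 2 + 2 / 9) * (1 / 2500) :=
      mul_le_mul hx_upper ht2 (sq_nonneg t) (by positivity)
    nlinarith [sq_nonneg (s * b + x * t)]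
  have hX : 99 / 100 * (x ^ 2 * b ^ 2) - 1 / 10000 ≤ (x * b + s * t) ^ 2 := by
    have e3 : s ^ 2 * t ^ 2 ≤ 1 / 2500 * (1 / 2500) :=
      mul_le_mul hs2 ht2 (sq_nonneg t) (by norm_num)
    nlinarith [sq_nonneg (x * b / 10 + 10 * (s * t))]
  have hD_upper : (b ^ 2 + t ^ 2) ^ 2 ≤ 16 / 9 * b ^ 2 + 1 / 500 := by nlinarith
  have hD_lower : b ^ 4 ≤ (b ^ 2 + t ^ 2) ^ 2 := by nlinarith [sq_nonneg t, sq_nonneg b]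
  nlinarith [mul_le_mul_of_nonneg_left hD_upper (sq_nonneg a),
    mul_le_mul_of_nonneg_left hx_lower (sq_nonneg b)]

lemma two_ninths_sq_sub_two_le_re (a : ℝ) {P Q : ℂ} (hP : ‖P‖ ≤ 1 / 3) (hP_im : |P.im| ≤ 1 / 50)
    (hQ : ‖Q‖ ≤ 1 / 3) (hQ_im : |Q.im| ≤ 1 / 50) :
    2 / 9 * a ^ 2 - 2 ≤ ((a + P) ^ 2 / (1 + Q) ^ 2).re := by
  have hPre := (abs_re_le_norm P).trans hP
  have hQre := (abs_re_le_norm Q).trans hQ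
  have hb : 0 < (1 + Q.re) ^ 2 + Q.im ^ 2 := by
    nlinarith [(abs_le.mp hQre).1, sq_nonneg Q.im]
  have hsplit : ((a + P) ^ 2 / (1 + Q) ^ 2)
      = (((a + P.re : ℝ) + P.im * I) / ((1 + Q.re : ℝ) + Q.im * I)) ^ 2 := by
    push_cast
    rw [add_assoc, re_add_im, add_assoc, re_add_im, div_pow]
  rw [hsplit, ← mul_le_mul_iff_of_pos_right (pow_pos hb 2), re_sq_div_sq_mul_eq _ _ _ _ hb.ne']
  exact two_ninths_sq_sub_two_mul_le_sq_sub_sq a _ _ _ _ (by simpa using hPre) hP_im (by simpa using hQre)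
    hQ_im

lemma norm_and_abs_im_quadratic_le {M c₁ c₂ : ℝ} {w : ℂ} (hM : 1 ≤ M) (hc₁ : |c₁| ≤ M) (hc₂ : |c₂| ≤ M)
    (hw : M * ‖w‖ ≤ 26 / 100) (hw_im : M * |w.im| ≤ 1 / 100) :
    ‖c₁ * w + c₂ * w ^ 2‖ ≤ 1 / 3 ∧ |(c₁ * w + c₂ * w ^ 2).im| ≤ 1 / 50 := by
  have hM0 : 0 ≤ M := zero_le_one.trans hM
  constructor
  · calc ‖c₁ * w + c₂ * w ^ 2‖ ≤ |c₁| * ‖w‖ + |c₂| * ‖w‖ ^ 2 := (norm_add_le _ _).trans_eq (by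
          rw [norm_mul, norm_mul, norm_pow, norm_real, norm_real, Real.norm_eq_abs,
            Real.norm_eq_abs])
      _ ≤ M * ‖w‖ + M ^ 2 * ‖w‖ ^ 2 := by gcongr; nlinarith
      _ ≤ 1 / 3 := by nlinarith [mul_nonneg hM0 (norm_nonneg w)]
  · have him : (c₁ * w + c₂ * w ^ 2).im = c₁ * w.im + c₂ * (2 * w.re * w.im) := by
      simp only [add_im, mul_im, ofReal_re, ofReal_im, pow_two]
      ring
    have hre : |w.re| ≤ 26 / 100 := by nlinarith [abs_re_le_norm w, norm_nonneg w]
    rw [him]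
    calc |c₁ * w.im + c₂ * (2 * w.re * w.im)|
        ≤ |c₁| * |w.im| + |c₂| * (2 * |w.re| * |w.im|) := by
          simpa [abs_mul] using abs_add_le (c₁ * w.im) (c₂ * (2 * w.re * w.im))
      _ ≤ M * |w.im| + M * (2 * (26 / 100) * |w.im|) := by gcongr
      _ ≤ 1 / 50 := by nlinarith

lemma norm_le_and_abs_im_le_of_mem_closedBall {M ε : ℝ} {w : ℂ} (hM : 0 < M) (hε : 0 ≤ ε)
    (hMε : M * ε ≤ 1 / 4) (hw : w ∈ closedBall (ε : ℂ) (1 / (100 * M))) :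
    M * ‖w‖ ≤ 26 / 100 ∧ M * |w.im| ≤ 1 / 100 := by
  rw [mem_closedBall, dist_eq] at hw
  have hMR : M * (1 / (100 * M)) = 1 / 100 := by field_simp
  have hw_im : |w.im| ≤ 1 / (100 * M) := by
    simpa using (abs_im_le_norm (w - ε)).trans hw
  have hw_norm : ‖w‖ ≤ ε + 1 / (100 * M) := by
    calc ‖w‖ ≤ ‖(ε : ℂ)‖ + ‖w - ε‖ := norm_le_norm_add_norm_sub' w ε
      _ ≤ ε + 1 / (100 * M) := by rw [norm_real, Real.norm_of_nonneg hε]; gcongr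
  constructor
  · nlinarith [mul_le_mul_of_nonneg_left hw_norm hM.le]
  · nlinarith [mul_le_mul_of_nonneg_left hw_im hM.le]

lemma Mconst_bounds (d1 d2 g1 g2 : ℝ) :
    1 ≤ Mconst d1 d2 g1 g2 ∧ |d1| ≤ Mconst d1 d2 g1 g2 ∧ |g1| ≤ Mconst d1 d2 g1 g2 ∧
      |2 * g1| ≤ Mconst d1 d2 g1 g2 ∧ |d2| ≤ Mconst d1 d2 g1 g2 ∧ |g2| ≤ Mconst d1 d2 g1 g2 ∧
      |2 * g2| ≤ Mconst d1 d2 g1 g2 := by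
  have h2g1 : 2 * |g1| ≤ Mconst d1 d2 g1 g2 := by simp [Mconst]
  have h2g2 : 2 * |g2| ≤ Mconst d1 d2 g1 g2 := by simp [Mconst]
  exact ⟨le_max_left _ _, by simp [Mconst], by linarith [abs_nonneg g1],
    by rwa [abs_mul, abs_two], by simp [Mconst], by linarith [abs_nonneg g2],
    by rwa [abs_mul, abs_two]⟩

noncomputable def gaussTerm (a c₁ c₂ e₁ e₂ : ℝ) (w : ℂ) : ℂ :=
  (a + (c₁ * w + c₂ * w ^ 2)) ^ 2 / (1 + (e₁ * w + e₂ * w ^ 2)) ^ 2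

noncomputable def gammaFormC (d1 d2 g1 g2 u y z : ℝ) (w : ℂ) : ℂ :=
  gaussTerm u d1 (-g1) (-d2) g2 w + gaussTerm y 0 (2 * g1) 0 (2 * g2) w
    + gaussTerm z (-d1) (-g1) d2 g2 w

lemma gammaFormC_ofReal (d1 d2 g1 g2 u y z t : ℝ) :
    gammaFormC d1 d2 g1 g2 u y z t = gammaForm d1 d2 g1 g2 u y z t := by
  simp only [gammaFormC, gaussTerm, gammaForm]
  push_cast
  ring

lemma exp_neg_gammaForm_div_two_eq_re (d1 d2 g1 g2 u y z t : ℝ) :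
    Real.exp (-(gammaForm d1 d2 g1 g2 u y z t) / 2)
      = (cexp (-gammaFormC d1 d2 g1 g2 u y z t / 2)).re := by
  rw [gammaFormC_ofReal, ← ofReal_neg, ← ofReal_ofNat, ← ofReal_div, ← ofReal_exp, ofReal_re]

section Disc

variable {M : ℝ} {w : ℂ}

lemma two_ninths_sq_sub_two_le_re_gaussTerm (a : ℝ) {c₁ c₂ e₁ e₂ : ℝ} (hM : 1 ≤ M)
    (hc₁ : |c₁| ≤ M) (hc₂ : |c₂| ≤ M) (he₁ : |e₁| ≤ M) (he₂ : |e₂| ≤ M)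
    (hw : M * ‖w‖ ≤ 26 / 100) (hw_im : M * |w.im| ≤ 1 / 100) :
    2 / 9 * a ^ 2 - 2 ≤ (gaussTerm a c₁ c₂ e₁ e₂ w).re :=
  two_ninths_sq_sub_two_le_re a (norm_and_abs_im_quadratic_le hM hc₁ hc₂ hw hw_im).1
    (norm_and_abs_im_quadratic_le hM hc₁ hc₂ hw hw_im).2 (norm_and_abs_im_quadratic_le hM he₁ he₂ hw hw_im).1
    (norm_and_abs_im_quadratic_le hM he₁ he₂ hw hw_im).2

lemma differentiableAt_gaussTerm (a : ℝ) {c₁ c₂ e₁ e₂ : ℝ} (hM : 1 ≤ M)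
    (he₁ : |e₁| ≤ M) (he₂ : |e₂| ≤ M) (hw : M * ‖w‖ ≤ 26 / 100) (hw_im : M * |w.im| ≤ 1 / 100) :
    DifferentiableAt ℂ (gaussTerm a c₁ c₂ e₁ e₂) w := by
  have hQ := (norm_and_abs_im_quadratic_le hM he₁ he₂ hw hw_im).1
  have hden : 1 + (e₁ * w + e₂ * w ^ 2) ≠ 0 := by
    intro h
    rw [eq_neg_of_add_eq_zero_right h, norm_neg, norm_one] at hQ
    norm_num at hQ
  unfold gaussTerm
  exact (by fun_prop : DifferentiableAt ℂ (fun w : ℂ => (a + (c₁ * w + c₂ * w ^ 2)) ^ 2) w).div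
    (by fun_prop) (pow_ne_zero 2 hden)

end Disc

section Gaussian

variable {d1 d2 g1 g2 ε : ℝ}

lemma re_gammaFormC_ge (u y z : ℝ) (hε : 0 ≤ ε) (hMε : Mconst d1 d2 g1 g2 * ε ≤ 1 / 4) {w : ℂ}
    (hw : w ∈ closedBall (ε : ℂ) (1 / (100 * Mconst d1 d2 g1 g2))) :
    2 / 9 * (u ^ 2 + y ^ 2 + z ^ 2) - 6 ≤ (gammaFormC d1 d2 g1 g2 u y z w).re := by
  obtain ⟨hM, hd1, hg1, h2g1, hd2, hg2, h2g2⟩ := Mconst_bounds d1 d2 g1 g2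
  obtain ⟨hw, hw_im⟩ := norm_le_and_abs_im_le_of_mem_closedBall (by linarith) hε hMε hw
  have h0 : |(0 : ℝ)| ≤ Mconst d1 d2 g1 g2 := by rw [abs_zero]; linarith
  have hnd1 : |-d1| ≤ Mconst d1 d2 g1 g2 := by rwa [abs_neg]
  have hng1 : |-g1| ≤ Mconst d1 d2 g1 g2 := by rwa [abs_neg]
  have hnd2 : |-d2| ≤ Mconst d1 d2 g1 g2 := by rwa [abs_neg]
  have hu := two_ninths_sq_sub_two_le_re_gaussTerm u hM hd1 hng1 hnd2 hg2 hw hw_im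
  have hy := two_ninths_sq_sub_two_le_re_gaussTerm y hM h0 h2g1 h0 h2g2 hw hw_im
  have hz := two_ninths_sq_sub_two_le_re_gaussTerm z hM hnd1 hng1 hd2 hg2 hw hw_im
  simp only [gammaFormC, add_re]
  linarith

lemma norm_cexp_neg_gammaFormC_le (u y z : ℝ) (hε : 0 ≤ ε)
    (hMε : Mconst d1 d2 g1 g2 * ε ≤ 1 / 4) {w : ℂ}
    (hw : w ∈ closedBall (ε : ℂ) (1 / (100 * Mconst d1 d2 g1 g2))) :
    ‖cexp (-gammaFormC d1 d2 g1 g2 u y z w / 2)‖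
      ≤ Real.exp 3 * Real.exp (-(u ^ 2 + y ^ 2 + z ^ 2) / 9) := by
  rw [norm_exp, ← Real.exp_add, Real.exp_le_exp, div_re, neg_re]
  norm_num
  linarith [re_gammaFormC_ge u y z hε hMε hw]

lemma differentiableOn_gammaFormC (u y z : ℝ) (hε : 0 ≤ ε)
    (hMε : Mconst d1 d2 g1 g2 * ε ≤ 1 / 4) :
    DifferentiableOn ℂ (gammaFormC d1 d2 g1 g2 u y z)
      (closedBall (ε : ℂ) (1 / (100 * Mconst d1 d2 g1 g2))) := by
  intro w hw
  obtain ⟨hM, -, -, -, hd2, hg2, h2g2⟩ := Mconst_bounds d1 d2 g1 g2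
  obtain ⟨hw, hw_im⟩ := norm_le_and_abs_im_le_of_mem_closedBall (by linarith) hε hMε hw
  have h0 : |(0 : ℝ)| ≤ Mconst d1 d2 g1 g2 := by rw [abs_zero]; linarith
  have hnd2 : |-d2| ≤ Mconst d1 d2 g1 g2 := by rwa [abs_neg]
  have hu := differentiableAt_gaussTerm u (c₁ := d1) (c₂ := -g1) hM hnd2 hg2 hw hw_im
  have hy := differentiableAt_gaussTerm y (c₁ := 0) (c₂ := 2 * g1) hM h0 h2g2 hw hw_im
  have hz := differentiableAt_gaussTerm z (c₁ := -d1) (c₂ := -g1) hM hd2 hg2 hw hw_im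
  exact ((hu.add hy).add hz).differentiableWithinAt

end Gaussian

lemma exp_three_lt : Real.exp 3 < 125 / 6 := by
  have h := pow_lt_pow_left₀ Real.exp_one_lt_d9 (Real.exp_pos 1).le (by norm_num : (3 : ℕ) ≠ 0)
  rw [← Real.exp_nat_mul] at h
  norm_num at h
  linarith

/-- for every `ε ≥ 0` with `M·ε ≤ 1/4`, the third derivative in `ε` of
`ε ↦ exp(−γ(ε)/2)` satisfies `|d³/dε³ exp(−γ(ε)/2)| ≤ 500³·M³·(ρ²+1)³·exp(−ρ²/9)`,
where `ρ² = u² + y² + z²`. -/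
theorem third_derivative_bound_exp_gammaForm (d1 d2 g1 g2 u y z : ℝ) :
    ∀ ε : ℝ, 0 ≤ ε → Mconst d1 d2 g1 g2 * ε ≤ 1 / 4 →
      |iteratedDeriv 3 (fun e => Real.exp (-(gammaForm d1 d2 g1 g2 u y z e) / 2)) ε|
        ≤ 500 ^ 3 * (Mconst d1 d2 g1 g2) ^ 3 * ((u ^ 2 + y ^ 2 + z ^ 2) + 1) ^ 3 *
            Real.exp (-(u ^ 2 + y ^ 2 + z ^ 2) / 9) := by
  intro ε hε hMε
  set M := Mconst d1 d2 g1 g2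
  set ρ2 := u ^ 2 + y ^ 2 + z ^ 2
  set F : ℂ → ℂ := fun w => cexp (-gammaFormC d1 d2 g1 g2 u y z w / 2)
  have hM : 0 < M := zero_lt_one.trans_le (Mconst_bounds d1 d2 g1 g2).1
  have hR : 0 < 1 / (100 * M) := by positivity
  have hF : DifferentiableOn ℂ F (closedBall (ε : ℂ) (1 / (100 * M))) :=
    ((differentiableOn_gammaFormC u y z hε hMε).neg.div_const 2).cexp
  have hcauchy := norm_iteratedDeriv_le_of_forall_mem_sphere_norm_le 3 hR
    (hF.diffContOnCl_ball subset_rfl)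
    (fun w hw => norm_cexp_neg_gammaFormC_le u y z hε hMε (sphere_subset_closedBall hw))
  simp_rw [exp_neg_gammaForm_div_two_eq_re]
  rw [iteratedDeriv_re_comp_ofReal isOpen_ball (hF.mono ball_subset_closedBall) 3
    (mem_ball_self hR)]
  calc |(iteratedDeriv 3 F ε).re| ≤ ‖iteratedDeriv 3 F ε‖ := abs_re_le_norm _
    _ ≤ (Nat.factorial 3) * (Real.exp 3 * Real.exp (-ρ2 / 9)) / (1 / (100 * M)) ^ 3 := hcauchy
    _ = (6 * Real.exp 3 * 100 ^ 3) * M ^ 3 * 1 * Real.exp (-ρ2 / 9) := by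
      rw [show (Nat.factorial 3 : ℝ) = 6 by norm_num [Nat.factorial]]
      field_simp
    _ ≤ 500 ^ 3 * M ^ 3 * (ρ2 + 1) ^ 3 * Real.exp (-ρ2 / 9) := by
      gcongr
      · linarith [exp_three_lt]
      · exact one_le_pow₀ (le_add_of_nonneg_left (by positivity))
end
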